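/- If the graph G^P is connected, then the eigenvalue 1 of 𝓗 = D^{-1}H has multiplicity exactly 3, and all other eigenvalues of 𝓗 are strictly less than 1. -/

import Mathlib

/-!
Let `B` be the block-diagonal matrix with blocks `h i`; orthogonality of the `h i` makes `B`
orthogonal, and `D⁻¹H = B (P ⊗ I₃) Bᵀ` where `P = Δ⁻¹A` is the transition matrix of the random
walk on `G`. Hence `D⁻¹H` has the eigenvalues of `P ⊗ I₃`. Its `1`-eigenspace is three copies of
that of `P`, which, as `P - 1 = -Δ⁻¹L`, is the kernel of the Laplacian `L`: one-dimensional for a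
connected graph. Every real eigenvalue `μ` of `P` satisfies `|μ| ≤ 1` by Gershgorin, since `P` has
zero diagonal and rows of absolute sum at most `1`.
-/

open Matrix Module
open scoped Kronecker

namespace Matrix

section Rank

variable {m K : Type*} [Fintype m] [Field K]

theorem finrank_ker_mulVecLin (X : Matrix m m K) :
    finrank K (LinearMap.ker X.mulVecLin) = Fintype.card m - X.rank := by
  have := LinearMap.finrank_range_add_finrank_ker X.mulVecLin
  rw [finrank_pi] at this
  rw [rank]
  omega

theorem finrank_ker_mulVecLin_mul_mul [DecidableEq m] {A C : Matrix m m K} (hA : IsUnit A.det)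
    (hC : IsUnit C.det) (X : Matrix m m K) :
    finrank K (LinearMap.ker (A * X * C).mulVecLin) = finrank K (LinearMap.ker X.mulVecLin) := by
  rw [finrank_ker_mulVecLin, finrank_ker_mulVecLin, rank_mul_eq_left_of_isUnit_det _ _ hC,
    rank_mul_eq_right_of_isUnit_det _ _ hA]

end Rank

section Kronecker

variable {l m n R : Type*}

theorem sub_kronecker [Ring R] (A B : Matrix l m R) (C : Matrix n n R) :
    (A - B) ⊗ₖ C = A ⊗ₖ C - B ⊗ₖ C := by
  ext
  simp [sub_mul]

theorem kronecker_one_mulVec_apply [Fintype m] [Fintype n] [DecidableEq n] [NonAssocSemiring R]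
    (Y : Matrix m m R) (w : m × n → R) (i : m) (c : n) :
    ((Y ⊗ₖ (1 : Matrix n n R)) *ᵥ w) (i, c) = (Y *ᵥ fun j => w (j, c)) i := by
  simp [mulVec, dotProduct, one_apply, Fintype.sum_prod_type]

variable [Fintype m] [Fintype n] [DecidableEq n] {K : Type*} [Field K]

theorem mulVec_eq_zero_iff_kronecker_one (Y : Matrix m m K) (w : m × n → K) :
    (Y ⊗ₖ (1 : Matrix n n K)) *ᵥ w = 0 ↔ ∀ c, (Y *ᵥ fun j => w (j, c)) = 0 := by
  simp only [funext_iff, Prod.forall, kronecker_one_mulVec_apply, Pi.zero_apply]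
  exact forall_comm

def kerKroneckerOneEquiv (Y : Matrix m m K) :
    LinearMap.ker (Y ⊗ₖ (1 : Matrix n n K)).mulVecLin ≃ₗ[K] (n → LinearMap.ker Y.mulVecLin) where
  toFun w c := ⟨fun i => w.1 (i, c),
    ((mulVec_eq_zero_iff_kronecker_one Y w.1).1 (LinearMap.mem_ker.1 w.2) c)⟩
  invFun f := ⟨fun p => (f p.2).1 p.1,
    (mulVec_eq_zero_iff_kronecker_one Y _).2 fun c => LinearMap.mem_ker.1 (f c).2⟩
  map_add' _ _ := rfl
  map_smul' _ _ := rfl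
  left_inv _ := rfl
  right_inv _ := rfl

theorem finrank_ker_kronecker_one (Y : Matrix m m K) :
    finrank K (LinearMap.ker (Y ⊗ₖ (1 : Matrix n n K)).mulVecLin) =
      Fintype.card n * finrank K (LinearMap.ker Y.mulVecLin) := by
  rw [(kerKroneckerOneEquiv Y).finrank_eq, finrank_pi_fintype, Finset.sum_const, smul_eq_mul,
    Finset.card_univ]

theorem exists_mulVec_eq_smul_of_kronecker_one {Y : Matrix m m K} {μ : K} {w : m × n → K}
    (hw : w ≠ 0) (hY : (Y ⊗ₖ (1 : Matrix n n K)) *ᵥ w = μ • w) :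
    ∃ x ≠ 0, Y *ᵥ x = μ • x := by
  obtain ⟨⟨i, c⟩, hic⟩ := Function.ne_iff.1 hw
  refine ⟨fun j => w (j, c), Function.ne_iff.2 ⟨i, hic⟩, funext fun j => ?_⟩
  simpa [kronecker_one_mulVec_apply] using congrFun hY (j, c)

end Kronecker

section BlockDiagonal

variable {ι n R : Type*} [DecidableEq ι]

def blockDiagonalFst [Zero R] (h : ι → Matrix n n R) : Matrix (ι × n) (ι × n) R :=
  (blockDiagonal h).submatrix Prod.swap Prod.swap

theorem blockDiagonalFst_apply [Zero R] (h : ι → Matrix n n R) (i j : ι) (a b : n) :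
    blockDiagonalFst h (i, a) (j, b) = if i = j then h i a b else 0 := by
  simp [blockDiagonalFst, blockDiagonal_apply']

theorem transpose_blockDiagonalFst_mul_self [Fintype ι] [Fintype n] [DecidableEq n]
    [CommSemiring R] {h : ι → Matrix n n R} (horth : ∀ i, (h i)ᵀ * h i = 1) :
    (blockDiagonalFst h)ᵀ * blockDiagonalFst h = 1 := by
  have := submatrix_mul_equiv (blockDiagonal h)ᵀ (blockDiagonal h) Prod.swap
    (Equiv.prodComm ι n) Prod.swap
  simp only [Equiv.coe_prodComm] at this
  rw [blockDiagonalFst, transpose_submatrix, this, blockDiagonal_transpose, ← blockDiagonal_mul,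
    funext horth, ← Pi.one_def, blockDiagonal_one]
  exact submatrix_one_equiv (Equiv.prodComm ι n)

theorem blockDiagonalFst_mul_kronecker_one_mul_transpose_apply [Fintype ι] [Fintype n]
    [DecidableEq n] [CommSemiring R] (h : ι → Matrix n n R) (X : Matrix ι ι R) (i j : ι)
    (a b : n) :
    (blockDiagonalFst h * (X ⊗ₖ (1 : Matrix n n R)) * (blockDiagonalFst h)ᵀ) (i, a) (j, b) =
      X i j * (h i * (h j)ᵀ) a b := by
  simp [mul_apply, blockDiagonalFst_apply, one_apply, Fintype.sum_prod_type, Finset.mul_sum]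
  exact Finset.sum_congr rfl fun _ _ => by ring

end BlockDiagonal

end Matrix

namespace SimpleGraph

variable {V : Type*} [Fintype V] [DecidableEq V] (G : SimpleGraph V) [DecidableRel G.Adj]

noncomputable def transitionMatrix : Matrix V V ℝ :=
  diagonal (fun i => (G.degree i : ℝ)⁻¹) * G.adjMatrix ℝ

theorem transitionMatrix_apply (i j : V) :
    G.transitionMatrix i j = if G.Adj i j then (G.degree i : ℝ)⁻¹ else 0 := by
  rw [transitionMatrix, diagonal_mul, adjMatrix_apply]
  split_ifs <;> simp

variable {G}

theorem Connected.card_connectedComponent (hconn : G.Connected) :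
    Fintype.card G.ConnectedComponent = 1 :=
  have := hconn.preconnected.subsingleton_connectedComponent
  Fintype.card_eq_one_of_forall_eq (i := G.connectedComponentMk hconn.nonempty.some)
    fun _ => Subsingleton.elim _ _

theorem transitionMatrix_sub_one (hdeg : ∀ i, 0 < G.degree i) :
    G.transitionMatrix - 1 = diagonal (fun i => -(G.degree i : ℝ)⁻¹) * G.lapMatrix ℝ := by
  have hd : ∀ i, (G.degree i : ℝ)⁻¹ * G.degree i = 1 := fun i =>
    inv_mul_cancel₀ (Nat.cast_ne_zero.2 (hdeg i).ne')
  ext i j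
  rw [diagonal_mul, Matrix.sub_apply, transitionMatrix_apply, lapMatrix, degMatrix,
    Matrix.sub_apply, adjMatrix_apply, one_apply, diagonal_apply]
  by_cases hij : i = j
  · subst hij
    simp [hd]
  · split_ifs <;> simp

theorem finrank_ker_transitionMatrix_sub_one (hdeg : ∀ i, 0 < G.degree i) :
    finrank ℝ (LinearMap.ker (G.transitionMatrix - 1).mulVecLin) =
      Fintype.card G.ConnectedComponent := by
  rw [transitionMatrix_sub_one hdeg, ← mul_one (_ * _), finrank_ker_mulVecLin_mul_mul _ (by simp),
    card_connectedComponent_eq_finrank_ker_toLin'_lapMatrix, toLin'_apply']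
  simp [det_diagonal, Finset.prod_ne_zero_iff, (hdeg _).ne']

theorem abs_le_one_of_transitionMatrix_mulVec_eq_smul {μ : ℝ} {x : V → ℝ} (hx : x ≠ 0)
    (hμ : G.transitionMatrix *ᵥ x = μ • x) : |μ| ≤ 1 := by
  obtain ⟨k, hk⟩ := eigenvalue_mem_ball (A := G.transitionMatrix)
    (Module.End.hasEigenvalue_of_hasEigenvector
      ⟨Module.End.mem_eigenspace_iff.2 (by rwa [toLin'_apply]), hx⟩)
  rw [Metric.mem_closedBall, transitionMatrix_apply, if_neg (G.irrefl), Real.dist_eq,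
    sub_zero] at hk
  calc |μ| ≤ ∑ j ∈ Finset.univ.erase k, ‖G.transitionMatrix k j‖ := hk
    _ ≤ ∑ j, ‖G.transitionMatrix k j‖ :=
      Finset.sum_le_sum_of_subset_of_nonneg (Finset.erase_subset _ _) fun _ _ _ => norm_nonneg _
    _ = ∑ j, (G.degree k : ℝ)⁻¹ * if G.Adj k j then 1 else 0 := by
      refine Finset.sum_congr rfl fun j _ => ?_
      rw [transitionMatrix_apply]
      split_ifs
      · rw [mul_one, Real.norm_of_nonneg (by positivity)]
      · rw [norm_zero, mul_zero]
    _ = (G.degree k : ℝ)⁻¹ * G.degree k := by rw [← Finset.mul_sum, ← degree_eq_sum_if_adj]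
    _ ≤ 1 := by
      by_cases hk : (G.degree k : ℝ) = 0 <;> simp [hk]

end SimpleGraph

open SimpleGraph

theorem stmt_6_general (N : ℕ) (G : SimpleGraph (Fin N)) [DecidableRel G.Adj]
    (hconn : G.Connected) (hdeg : ∀ i, 0 < G.degree i)
    (h : Fin N → Matrix (Fin 3) (Fin 3) ℝ)
    (horth : ∀ i, (h i)ᵀ * h i = 1)
    (H : Matrix (Fin N × Fin 3) (Fin N × Fin 3) ℝ)
    (hH : ∀ p q, H p q = if G.Adj p.1 q.1 then (h p.1 * (h q.1)ᵀ) p.2 q.2 else 0)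
    (Dinv : Matrix (Fin N × Fin 3) (Fin N × Fin 3) ℝ)
    (hD : Dinv = Matrix.diagonal fun p => ((G.degree p.1 : ℝ))⁻¹) :
    Module.finrank ℝ (LinearMap.ker ((Dinv * H - 1).mulVecLin)) = 3
    ∧ ∀ (mu : ℝ) (v : Fin N × Fin 3 → ℝ), v ≠ 0 → (Dinv * H) *ᵥ v = mu • v →
        mu ≠ 1 → mu < 1 := by
  set B := blockDiagonalFst h
  have hBtB : Bᵀ * B = 1 := transpose_blockDiagonalFst_mul_self horth
  have hBBt : B * Bᵀ = 1 := mul_eq_one_comm.1 hBtB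
  have hconj : Dinv * H = B * (G.transitionMatrix ⊗ₖ 1) * Bᵀ := by
    ext ⟨i, a⟩ ⟨j, b⟩
    rw [hD, diagonal_mul, hH, blockDiagonalFst_mul_kronecker_one_mul_transpose_apply,
      transitionMatrix_apply]
    split_ifs <;> simp
  constructor
  · have hsub : Dinv * H - 1 = B * ((G.transitionMatrix - 1) ⊗ₖ 1) * Bᵀ := by
      rw [hconj, sub_kronecker, one_kronecker_one, mul_sub, sub_mul, mul_one, hBBt]
    rw [hsub, finrank_ker_mulVecLin_mul_mul (isUnit_det_of_right_inverse hBBt)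
      (isUnit_det_of_left_inverse hBBt), finrank_ker_kronecker_one,
      finrank_ker_transitionMatrix_sub_one hdeg, hconn.card_connectedComponent]
    simp
  · intro μ v hv hμ hne
    have hBtv : Bᵀ *ᵥ v ≠ 0 := fun h0 => hv <| by
      rw [← one_mulVec v, ← hBBt, ← mulVec_mulVec, h0, mulVec_zero]
    have hμ' : (G.transitionMatrix ⊗ₖ 1) *ᵥ (Bᵀ *ᵥ v) = μ • (Bᵀ *ᵥ v) := by
      rw [← mulVec_smul, ← hμ, hconj, mulVec_mulVec, mulVec_mulVec, ← mul_assoc, ← mul_assoc,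
        hBtB, one_mul]
    obtain ⟨x, hx, hPx⟩ := exists_mulVec_eq_smul_of_kronecker_one hBtv hμ'
    exact lt_of_le_of_ne
      ((le_abs_self μ).trans (abs_le_one_of_transitionMatrix_mulVec_eq_smul hx hPx)) hne

/-- If `G^P` is connected (N ≥ 2, positive degrees), the eigenvalue 1 of
`𝓗 = D⁻¹H` has multiplicity exactly 3 (its eigenspace is 3-dimensional) and every other
eigenvalue of `𝓗` is strictly less than 1. -/
theorem stmt_6 (N : ℕ) (hN : 2 ≤ N) (G : SimpleGraph (Fin N)) [DecidableRel G.Adj]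
    (hconn : G.Connected) (hdeg : ∀ i, 0 < G.degree i)
    (h : Fin N → Matrix (Fin 3) (Fin 3) ℝ)
    (horth : ∀ i, (h i)ᵀ * h i = 1)
    (H : Matrix (Fin N × Fin 3) (Fin N × Fin 3) ℝ)
    (hH : ∀ p q, H p q = if G.Adj p.1 q.1 then (h p.1 * (h q.1)ᵀ) p.2 q.2 else 0)
    (Dinv : Matrix (Fin N × Fin 3) (Fin N × Fin 3) ℝ)
    (hD : Dinv = Matrix.diagonal fun p => ((G.degree p.1 : ℝ))⁻¹) :
    Module.finrank ℝ (LinearMap.ker ((Dinv * H - 1).mulVecLin)) = 3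
    ∧ ∀ (mu : ℝ) (v : Fin N × Fin 3 → ℝ), v ≠ 0 → (Dinv * H) *ᵥ v = mu • v →
        mu ≠ 1 → mu < 1 :=
  stmt_6_general N G hconn hdeg h horth H hH Dinv hD
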